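/- Let ω be continuous, strictly increasing, concave with ω(0) = 0. Fix an integer k ≥ 1 and for a nonnegative integer j ≤ k define φ_j : ℝ≥0 → ℝ≥0 by φ_j(t) := ω(ψ_j(t)) where ψ_j is the inverse of s ↦ s^{k−j} ω(s) for j < k, and φ_k(t) := t. Then for all t₁, t₂ > 0 and all nonnegative integers a, b with a + b ≤ k, one has φ_a(t₁^b · t₂) ≤ max{ω(t₁), φ_{a+b}(t₂)}. -/

import Mathlib

/-!
Let `m = k - a` and `s = psiInv ω m (t₁^b t₂)`, so that `s^m ω(s) = t₁^b t₂`. If `s ≤ t₁` then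
`ω(s) ≤ ω(t₁)`. Otherwise `t₁^b ≤ s^b`, and cancelling gives `s^(m-b) ω(s) ≤ t₂`. As
`s ↦ s^(m-b) ω(s)` is strictly increasing, this says `s ≤ psiInv ω (m-b) t₂`, i.e.
`ω(s) ≤ φ_(a+b)(t₂)`; for `a + b = k` it reads `ω(s) ≤ t₂` directly.
-/

/-- `ψ_m`: the inverse of `s ↦ s^m * ω s` on `[0,∞)`. -/
noncomputable def psiInv (ω : ℝ → ℝ) (m : ℕ) (t : ℝ) : ℝ :=
  Function.invFunOn (fun s => s ^ m * ω s) (Set.Ici 0) t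

/-- `φ_j` for `0 ≤ j ≤ k`: `ω ∘ ψ_{k-j}` if `j < k`, the identity if `j = k`. -/
noncomputable def phiOm (ω : ℝ → ℝ) (k j : ℕ) (t : ℝ) : ℝ :=
  if j < k then ω (psiInv ω (k - j) t) else t

open Set

section PowMul

variable {ω : ℝ → ℝ}

lemma nonneg_of_strictMonoOn_Ici (hmono : StrictMonoOn ω (Ici 0)) (h0 : ω 0 = 0) {s : ℝ}
    (hs : 0 ≤ s) : 0 ≤ ω s :=
  h0 ▸ hmono.monotoneOn self_mem_Ici hs hs

lemma strictMonoOn_pow_mul (hmono : StrictMonoOn ω (Ici 0)) (h0 : ω 0 = 0) (m : ℕ) :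
    StrictMonoOn (fun s => s ^ m * ω s) (Ici 0) := by
  intro s hs t ht hst
  calc s ^ m * ω s ≤ t ^ m * ω s :=
        mul_le_mul_of_nonneg_right (pow_le_pow_left₀ hs hst.le m)
          (nonneg_of_strictMonoOn_Ici hmono h0 hs)
    _ < t ^ m * ω t := mul_lt_mul_of_pos_left (hmono hs ht hst) (pow_pos (hs.trans_lt hst) m)

lemma exists_pow_mul_eq (hcont : ContinuousOn ω (Ici 0)) (hmono : StrictMonoOn ω (Ici 0))
    (h0 : ω 0 = 0) {m : ℕ} (hm : m ≠ 0) {t : ℝ} (ht : 0 ≤ t) :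
    ∃ s ∈ Ici (0 : ℝ), s ^ m * ω s = t := by
  have hω1 : 0 < ω 1 := h0 ▸ hmono self_mem_Ici (mem_Ici.mpr zero_le_one) zero_lt_one
  set R := max 1 (t / ω 1)
  have hR : 1 ≤ R := le_max_left _ _
  have hR0 : 0 ≤ R := zero_le_one.trans hR
  have ht_le : t ≤ R ^ m * ω R :=
    calc t ≤ R * ω 1 := (div_le_iff₀ hω1).mp (le_max_right _ _)
      _ ≤ R ^ m * ω R := by
        gcongr
        · exact le_self_pow₀ hR hm
        · exact hmono.monotoneOn (mem_Ici.mpr zero_le_one) (mem_Ici.mpr hR0) hR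
  have hcont' : ContinuousOn (fun s => s ^ m * ω s) (Icc 0 R) :=
    ((continuousOn_id.pow m).mul hcont).mono Icc_subset_Ici_self
  obtain ⟨s, hs, hs_eq⟩ := intermediate_value_Icc hR0 hcont' ⟨by simpa [h0] using ht, ht_le⟩
  exact ⟨s, hs.1, hs_eq⟩

lemma psiInv_spec (hcont : ContinuousOn ω (Ici 0)) (hmono : StrictMonoOn ω (Ici 0))
    (h0 : ω 0 = 0) {m : ℕ} (hm : m ≠ 0) {t : ℝ} (ht : 0 ≤ t) :
    0 ≤ psiInv ω m t ∧ psiInv ω m t ^ m * ω (psiInv ω m t) = t :=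
  have hex := exists_pow_mul_eq hcont hmono h0 hm ht
  ⟨Function.invFunOn_mem hex, Function.invFunOn_eq hex⟩

lemma le_phiOm_of_pow_mul_le (hcont : ContinuousOn ω (Ici 0))
    (hmono : StrictMonoOn ω (Ici 0)) (h0 : ω 0 = 0) {k j : ℕ} {s t : ℝ} (hs : 0 ≤ s)
    (h : s ^ (k - j) * ω s ≤ t) : ω s ≤ phiOm ω k j t := by
  unfold phiOm
  split_ifs with hj
  · have ht : 0 ≤ t :=
      (mul_nonneg (pow_nonneg hs _) (nonneg_of_strictMonoOn_Ici hmono h0 hs)).trans h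
    obtain ⟨hψ0, hψ⟩ := psiInv_spec hcont hmono h0 (Nat.sub_ne_zero_of_lt hj) ht
    have hsψ : s ≤ psiInv ω (k - j) t :=
      ((strictMonoOn_pow_mul hmono h0 (k - j)).le_iff_le hs hψ0).mp (hψ.symm ▸ h)
    exact hmono.monotoneOn hs hψ0 hsψ
  · simpa [Nat.sub_eq_zero_of_le (not_lt.mp hj)] using h

end PowMul

theorem phi_product_estimate_general (k : ℕ)
    (ω : ℝ → ℝ)
    (hcont : ContinuousOn ω (Set.Ici 0))
    (hmono : StrictMonoOn ω (Set.Ici 0))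
    (h0 : ω 0 = 0) :
    ∀ t₁ t₂ : ℝ, 0 < t₁ → 0 < t₂ → ∀ a b : ℕ, a + b ≤ k →
      phiOm ω k a (t₁ ^ b * t₂) ≤ max (ω t₁) (phiOm ω k (a + b) t₂) := by
  intro t₁ t₂ ht₁ ht₂ a b hab
  rcases lt_or_ge a k with ha | ha
  · obtain ⟨hs0, hs_eq⟩ := psiInv_spec hcont hmono h0 (Nat.sub_ne_zero_of_lt ha)
      (by positivity : 0 ≤ t₁ ^ b * t₂)
    set s := psiInv ω (k - a) (t₁ ^ b * t₂)
    rw [phiOm, if_pos ha]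
    rcases le_or_gt s t₁ with hst | hst
    · exact (hmono.monotoneOn hs0 ht₁.le hst).trans (le_max_left _ _)
    refine (le_phiOm_of_pow_mul_le hcont hmono h0 hs0 ?_).trans (le_max_right _ _)
    have hsplit : s ^ (k - a) = s ^ b * s ^ (k - (a + b)) := by rw [← pow_add]; congr 1; omega
    have hωs := nonneg_of_strictMonoOn_Ici hmono h0 hs0
    refine le_of_mul_le_mul_left ?_ (pow_pos ht₁ b)
    calc t₁ ^ b * (s ^ (k - (a + b)) * ω s) ≤ s ^ b * (s ^ (k - (a + b)) * ω s) := by gcongr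
      _ = t₁ ^ b * t₂ := by rw [← hs_eq, hsplit, mul_assoc]
  · obtain ⟨rfl, rfl⟩ : a = k ∧ b = 0 := by omega
    simp [phiOm]

/-- Lemma 2.2: for `t₁, t₂ > 0` and `a + b ≤ k`,
`φ_a(t₁^b · t₂) ≤ max{ω(t₁), φ_{a+b}(t₂)}`. -/
theorem phi_product_estimate (k : ℕ) (hk : 1 ≤ k)
    (ω : ℝ → ℝ)
    (hnn : ∀ t, 0 ≤ t → 0 ≤ ω t)
    (hcont : ContinuousOn ω (Set.Ici 0))
    (hmono : StrictMonoOn ω (Set.Ici 0))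
    (hconc : ConcaveOn ℝ (Set.Ici 0) ω)
    (h0 : ω 0 = 0) :
    ∀ t₁ t₂ : ℝ, 0 < t₁ → 0 < t₂ → ∀ a b : ℕ, a + b ≤ k →
      phiOm ω k a (t₁ ^ b * t₂) ≤ max (ω t₁) (phiOm ω k (a + b) t₂) :=
  phi_product_estimate_general k ω hcont hmono h0
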